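/- arXiv:1210.0974 — 2 statements merged into one kernel-verified Lean document; each statement's English description precedes it below -/
import Mathlib

section
/- Let ω = e^{iπ/4}. For all x, y, z ∈ {0,1}, (−1)^{xyz} = ω^x · ω^y · ω^z · ω̄^{x⊕y} · ω̄^{y⊕z} · ω̄^{x⊕z} · ω^{x⊕y⊕z}, where ω̄ is the complex conjugate of ω and ⊕ is XOR. -/
open Complex Real

/- Writing `a ⊕ b = a + b - 2ab`, the signed sum of exponents
`x + y + z - (x ⊕ y) - (y ⊕ z) - (x ⊕ z) + (x ⊕ y ⊕ z)` is the polynomial `4xyz`, so the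
right-hand side collapses to `ω ^ (4xyz) = (ω ^ 4) ^ (xyz) = (-1) ^ (xyz)`. -/

theorem neg_one_zpow_mul_mul_eq_of_pow_four_eq_neg_one {K : Type*} [Field K] {ω : K}
    (hω : ω ^ 4 = -1) (x y z : ℤ) :
    (-1 : K) ^ (x * y * z) =
      ω ^ x * ω ^ y * ω ^ z *
        ω⁻¹ ^ (x + y - 2 * x * y) * ω⁻¹ ^ (y + z - 2 * y * z) * ω⁻¹ ^ (x + z - 2 * x * z) *
        ω ^ ((x + y - 2 * x * y) + z - 2 * (x + y - 2 * x * y) * z) := by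
  have hω₀ : ω ≠ 0 := by
    rintro rfl
    norm_num at hω
  have hexp : x + y + z - (x + y - 2 * x * y) - (y + z - 2 * y * z) - (x + z - 2 * x * z) +
      ((x + y - 2 * x * y) + z - 2 * (x + y - 2 * x * y) * z) = 4 * (x * y * z) := by
    ring
  simp only [inv_zpow', ← zpow_add₀ hω₀, ← sub_eq_add_neg, hexp]
  rw [zpow_mul ω, show ω ^ (4 : ℤ) = -1 from mod_cast hω]

theorem Complex.conj_exp_mul_I (θ : ℝ) :
    starRingEnd ℂ (exp (θ * I)) = (exp (θ * I))⁻¹ := by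
  rw [← exp_conj, ← exp_neg, map_mul, conj_ofReal, conj_I, mul_neg]

theorem Complex.exp_pi_div_four_mul_I_pow_four : exp (π / 4 * I) ^ 4 = -1 := by
  rw [← exp_nat_mul, ← exp_pi_mul_I]
  congr 1
  push_cast
  ring

open Complex in
theorem stmt_3_general (x y z : ℤ) :
    let ω : ℂ := Complex.exp (Complex.I * Real.pi / 4)
    (-1 : ℂ) ^ (x * y * z) =
      ω ^ x * ω ^ y * ω ^ z *
        (starRingEnd ℂ ω) ^ (x + y - 2 * x * y) *
        (starRingEnd ℂ ω) ^ (y + z - 2 * y * z) *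
        (starRingEnd ℂ ω) ^ (x + z - 2 * x * z) *
        ω ^ ((x + y - 2 * x * y) + z - 2 * (x + y - 2 * x * y) * z) := by
  intro ω
  have hω : ω = exp ((π / 4 : ℝ) * I) := by
    simp only [ω]
    congr 1
    push_cast
    ring
  rw [hω, conj_exp_mul_I]
  apply neg_one_zpow_mul_mul_eq_of_pow_four_eq_neg_one
  exact_mod_cast exp_pi_div_four_mul_I_pow_four

open Complex in
theorem stmt_3 (x y z : ℤ) (hx : x = 0 ∨ x = 1) (hy : y = 0 ∨ y = 1)
    (hz : z = 0 ∨ z = 1) :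
    let ω : ℂ := Complex.exp (Complex.I * Real.pi / 4)
    (-1 : ℂ) ^ (x * y * z) =
      ω ^ x * ω ^ y * ω ^ z *
        (starRingEnd ℂ ω) ^ (x + y - 2 * x * y) *
        (starRingEnd ℂ ω) ^ (y + z - 2 * y * z) *
        (starRingEnd ℂ ω) ^ (x + z - 2 * x * z) *
        ω ^ ((x + y - 2 * x * y) + z - 2 * (x + y - 2 * x * y) * z) :=
  stmt_3_general x y z
end

section
/- Let ω = e^{iπ/4}. For all x, y, z ∈ {0,1}, (−1)^{xyz} · (−i)^{xy} = ω^z · ω̄^{y⊕z} · ω̄^{x⊕z} · ω^{x⊕y⊕z}. -/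
/-! Since `ω̄ = ω⁻¹`, the right-hand side is a single power of `ω`. With `a ⊕ b = a + b - 2ab`
its exponent `z - (y ⊕ z) - (x ⊕ z) + (x ⊕ y ⊕ z)` is the polynomial `4xyz - 2xy`, and
`ω⁴ = -1`, `ω⁻² = -i`. -/

open Complex ComplexConjugate

theorem zpow_mul_inv_zpow_xor {G₀ : Type*} [CommGroupWithZero G₀] {ω : G₀} (hω : ω ≠ 0)
    (x y z : ℤ) :
    ω ^ z * ω⁻¹ ^ (y + z - 2 * y * z) * ω⁻¹ ^ (x + z - 2 * x * z) *
        ω ^ ((x + y - 2 * x * y) + z - 2 * (x + y - 2 * x * y) * z) =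
      (ω ^ (4 : ℤ)) ^ (x * y * z) * (ω ^ (-2 : ℤ)) ^ (x * y) := by
  simp only [inv_zpow', ← zpow_mul, ← zpow_add₀ hω]
  ring_nf

theorem exp_I_pi_div_four_sq : exp (I * Real.pi / 4) ^ 2 = I := by
  rw [← exp_nat_mul,
    show ((2 : ℕ) : ℂ) * (I * Real.pi / 4) = (Real.pi / 2 : ℝ) * I by push_cast; ring, exp_mul_I,
    ← ofReal_cos, ← ofReal_sin, Real.cos_pi_div_two, Real.sin_pi_div_two]
  simp

theorem conj_exp_I_pi_div_four : conj (exp (I * Real.pi / 4)) = (exp (I * Real.pi / 4))⁻¹ := by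
  rw [← exp_conj, ← exp_neg, map_div₀, map_mul, conj_I, conj_ofReal, map_ofNat]
  ring_nf

theorem stmt_5_general (x y z : ℤ) :
    let ω : ℂ := Complex.exp (Complex.I * Real.pi / 4)
    (-1 : ℂ) ^ (x * y * z) * (-Complex.I) ^ (x * y) =
      ω ^ z *
        (starRingEnd ℂ ω) ^ (y + z - 2 * y * z) *
        (starRingEnd ℂ ω) ^ (x + z - 2 * x * z) *
        ω ^ ((x + y - 2 * x * y) + z - 2 * (x + y - 2 * x * y) * z) := by
  intro ω
  have hω4 : ω ^ (4 : ℤ) = -1 := by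
    rw [show (4 : ℤ) = (2 : ℕ) * (2 : ℕ) by norm_num, zpow_mul, zpow_natCast, zpow_natCast,
      exp_I_pi_div_four_sq, I_sq]
  have hω_neg_two : ω ^ (-2 : ℤ) = -I := by
    rw [zpow_neg, zpow_two, ← sq, exp_I_pi_div_four_sq, inv_I]
  rw [conj_exp_I_pi_div_four, zpow_mul_inv_zpow_xor (exp_ne_zero _), hω4, hω_neg_two]

theorem stmt_5 (x y z : ℤ) (hx : x = 0 ∨ x = 1) (hy : y = 0 ∨ y = 1)
    (hz : z = 0 ∨ z = 1) :
    let ω : ℂ := Complex.exp (Complex.I * Real.pi / 4)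
    (-1 : ℂ) ^ (x * y * z) * (-Complex.I) ^ (x * y) =
      ω ^ z *
        (starRingEnd ℂ ω) ^ (y + z - 2 * y * z) *
        (starRingEnd ℂ ω) ^ (x + z - 2 * x * z) *
        ω ^ ((x + y - 2 * x * y) + z - 2 * (x + y - 2 * x * y) * z) :=
  stmt_5_general x y z
end
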